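/- For ρ > 0 and λ₁(ρ) = iρ, λ₂(ρ) = ((√3 - i)/2)ρ, λ₃(ρ) = -((√3 + i)/2)ρ, the quantity Δ¹(ρ) := (λ₃-λ₂)e^{-λ₁} + (λ₁-λ₃)e^{-λ₂} + (λ₂-λ₁)e^{-λ₃} satisfies |Δ¹(ρ)| / (ρ e^{(√3/2)ρ}) → √3 as ρ → +∞. -/

import Mathlib

noncomputable def lam1 (ρ : ℝ) : ℂ := Complex.I * ρ
noncomputable def lam2 (ρ : ℝ) : ℂ := ((Real.sqrt 3 : ℂ) - Complex.I) / 2 * ρ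
noncomputable def lam3 (ρ : ℝ) : ℂ := -(((Real.sqrt 3 : ℂ) + Complex.I) / 2 * ρ)

noncomputable def Delta1 (ρ : ℝ) : ℂ :=
  (lam3 ρ - lam2 ρ) * Complex.exp (-lam1 ρ) +
  (lam1 ρ - lam3 ρ) * Complex.exp (-lam2 ρ) +
  (lam2 ρ - lam1 ρ) * Complex.exp (-lam3 ρ)

/-!
Only `e^{-λ₃} = e^{(√3 + i)ρ/2}` grows: factoring out `ρ e^{√3ρ/2}` leaves the
oscillation `((√3 - 3i)/2) e^{iρ/2}`, of constant modulus `√3`, plus terms decaying like `e^{-√3ρ/2}`.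
-/

open Filter Topology Complex

theorem tendsto_norm_add_of_norm_eq_of_tendsto_zero {α E : Type*} [SeminormedAddCommGroup E]
    {l : Filter α} {f g : α → E} {c : ℝ} (hf : ∀ x, ‖f x‖ = c) (hg : Tendsto g l (𝓝 0)) :
    Tendsto (fun x => ‖f x + g x‖) l (𝓝 c) := by
  have hdiff : Tendsto (fun x => ‖f x + g x‖ - ‖f x‖) l (𝓝 0) :=
    squeeze_zero_norm (fun x => (abs_norm_sub_norm_le _ _).trans_eq (by rw [add_sub_cancel_left]))
      (by simpa using hg.norm)
  simpa [hf] using hdiff.add_const c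

theorem tendsto_cexp_mul_ofReal_atTop {z : ℂ} (hz : z.re < 0) :
    Tendsto (fun ρ : ℝ => exp (z * ρ)) atTop (𝓝 0) := by
  refine tendsto_zero_iff_norm_tendsto_zero.2 ?_
  simp only [norm_exp, mul_re, ofReal_re, ofReal_im, mul_zero, sub_zero]
  exact Real.tendsto_exp_comp_nhds_zero.2 (tendsto_id.const_mul_atTop_of_neg hz)

noncomputable def delta1Leading (ρ : ℝ) : ℂ :=
  ((Real.sqrt 3 : ℂ) - 3 * I) / 2 * exp ((ρ / 2 : ℝ) * I)

noncomputable def delta1Remainder (ρ : ℝ) : ℂ :=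
  -(Real.sqrt 3 : ℂ) * exp ((-(Real.sqrt 3 : ℂ) / 2 - I) * ρ) +
    ((Real.sqrt 3 : ℂ) + 3 * I) / 2 * exp ((-(Real.sqrt 3 : ℂ) + I / 2) * ρ)

theorem delta1_eq (ρ : ℝ) :
    Delta1 ρ = ((ρ * Real.exp (Real.sqrt 3 / 2 * ρ) : ℝ) : ℂ) * (delta1Leading ρ + delta1Remainder ρ) := by
  set E := exp ((Real.sqrt 3 : ℂ) / 2 * ρ)
  have h1 : exp (-lam1 ρ) = E * exp ((-(Real.sqrt 3 : ℂ) / 2 - I) * ρ) := by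
    rw [← exp_add]; unfold lam1; ring_nf
  have h2 : exp (-lam2 ρ) = E * exp ((-(Real.sqrt 3 : ℂ) + I / 2) * ρ) := by
    rw [← exp_add]; unfold lam2; ring_nf
  have h3 : exp (-lam3 ρ) = E * exp ((ρ / 2 : ℝ) * I) := by
    rw [← exp_add]; unfold lam3; push_cast; ring_nf
  rw [Delta1, h1, h2, h3, delta1Leading, delta1Remainder, lam1, lam2, lam3]
  push_cast [ofReal_exp]
  ring

theorem norm_delta1Leading (ρ : ℝ) : ‖delta1Leading ρ‖ = Real.sqrt 3 := by
  rw [delta1Leading, norm_mul, norm_exp_ofReal_mul_I, mul_one, norm_def]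
  congr 1
  norm_num [normSq_apply]

theorem tendsto_delta1Remainder : Tendsto delta1Remainder atTop (𝓝 0) := by
  have h1 := tendsto_cexp_mul_ofReal_atTop (z := -(Real.sqrt 3 : ℂ) / 2 - I) (by norm_num [neg_div])
  have h2 := tendsto_cexp_mul_ofReal_atTop (z := -(Real.sqrt 3 : ℂ) + I / 2) (by simp)
  convert (h1.const_mul (-(Real.sqrt 3 : ℂ))).add (h2.const_mul (((Real.sqrt 3 : ℂ) + 3 * I) / 2)) using 1
  · ext ρ
    rfl
  · simp

theorem stmt4 :
    Filter.Tendsto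
      (fun ρ : ℝ => ‖Delta1 ρ‖ / (ρ * Real.exp (Real.sqrt 3 / 2 * ρ)))
      Filter.atTop (nhds (Real.sqrt 3)) := by
  refine (tendsto_norm_add_of_norm_eq_of_tendsto_zero norm_delta1Leading tendsto_delta1Remainder).congr' ?_
  filter_upwards [eventually_gt_atTop 0] with ρ hρ
  have hscale : 0 < ρ * Real.exp (Real.sqrt 3 / 2 * ρ) := by positivity
  rw [delta1_eq, norm_mul, norm_real, Real.norm_of_nonneg hscale.le, mul_div_cancel_left₀ _ hscale.ne']
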